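/- arXiv:1111.6153 — 3 statements merged into one kernel-verified Lean document; each statement's English description precedes it below -/
import Mathlib

section
/- Every element of PSL(2,ℂ) is a commutator: for every g in PSL(2,ℂ) there exist elements x and y of PSL(2,ℂ) such that g = x·y·x⁻¹·y⁻¹. -/
/-!
Over an algebraically closed field every element of `SL(2)` has an eigenvector, so it is
conjugate to an upper triangular matrix `[[a, b], [0, a⁻¹]]`. If `a ≠ ±1` this matrix is
conjugate to `diag(a, a⁻¹) = ⁅diag(μ, μ⁻¹), w⁆`, where `μ² = a` and `w` is the Weyl element.
If `a = ±1`, then plus or minus it is a unipotent `[[1, b], [0, 1]]`, and these are commutators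
too: `⁅diag(μ, μ⁻¹), [[1, s], [0, 1]]⁆ = [[1, (μ² - 1) s], [0, 1]]`, with any `μ² ≠ 0, 1`.
Since `-1` is central, `A` and `-A` have the same image in `PSL(2)`.
-/

/-- `PSL(2,ℂ)`: the quotient of `SL(2,ℂ)` by its center `{I, -I}`. -/
abbrev PSL2C :=
  Matrix.SpecialLinearGroup (Fin 2) ℂ ⧸
    Subgroup.center (Matrix.SpecialLinearGroup (Fin 2) ℂ)

open Matrix MatrixGroups Polynomial
open scoped commutatorElement

section

variable {G H : Type*} [Group G] [Group H]

lemma IsConj.mem_commutatorSet {g h : G} (hgh : IsConj g h) (hg : g ∈ commutatorSet G) :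
    h ∈ commutatorSet G := by
  obtain ⟨c, rfl⟩ := isConj_iff.mp hgh
  obtain ⟨x, y, rfl⟩ := hg
  exact ⟨_, _, (conjugate_commutatorElement x y c).symm⟩

lemma MonoidHom.map_mem_commutatorSet (f : G →* H) {g : G} (hg : g ∈ commutatorSet G) :
    f g ∈ commutatorSet H := by
  obtain ⟨x, y, rfl⟩ := hg
  exact ⟨_, _, (map_commutatorElement f x y).symm⟩

end

namespace Matrix.SpecialLinearGroup

variable {K : Type*} [Field K]

def upperTriangular (a : Kˣ) (b : K) : SL(2, K) :=
  ⟨!![(a : K), b; 0, (a : K)⁻¹], by simp⟩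

def weyl : SL(2, K) :=
  ⟨!![0, -1; 1, 0], by simp⟩

@[simp]
lemma coe_upperTriangular (a : Kˣ) (b : K) :
    (upperTriangular a b : Matrix (Fin 2) (Fin 2) K) = !![(a : K), b; 0, (a : K)⁻¹] :=
  rfl

@[simp]
lemma coe_weyl : ((weyl : SL(2, K)) : Matrix (Fin 2) (Fin 2) K) = !![0, -1; 1, 0] :=
  rfl

lemma upperTriangular_mul_upperTriangular (a a' : Kˣ) (b b' : K) :
    upperTriangular a b * upperTriangular a' b' =
      upperTriangular (a * a') (a * b' + b * (a' : K)⁻¹) := by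
  ext i j; fin_cases i <;> fin_cases j <;> simp [mul_comm]

lemma upperTriangular_inv (a : Kˣ) (b : K) :
    (upperTriangular a b)⁻¹ = upperTriangular a⁻¹ (-b) := by
  ext i j; fin_cases i <;> fin_cases j <;> simp [coe_inv, adjugate_fin_two]

lemma neg_upperTriangular (a : Kˣ) (b : K) :
    -upperTriangular a b = upperTriangular (-a) (-b) := by
  ext i j; fin_cases i <;> fin_cases j <;> simp

lemma weyl_mul_upperTriangular_mul_inv (a : Kˣ) :
    weyl * upperTriangular a 0 * weyl⁻¹ = upperTriangular a⁻¹ 0 := by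
  ext i j; fin_cases i <;> fin_cases j <;> simp [coe_inv, adjugate_fin_two]

lemma commutatorElement_upperTriangular_weyl (μ : Kˣ) :
    ⁅upperTriangular μ 0, weyl⁆ = upperTriangular (μ * μ) 0 := by
  rw [commutatorElement_def, upperTriangular_inv, neg_zero, mul_assoc _ weyl, mul_assoc,
    weyl_mul_upperTriangular_mul_inv, inv_inv, upperTriangular_mul_upperTriangular]
  simp

lemma commutatorElement_upperTriangular_upperTriangular_one (μ : Kˣ) (s : K) :
    ⁅upperTriangular μ 0, upperTriangular 1 s⁆ = upperTriangular 1 ((μ * μ - 1) * s) := by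
  simp only [commutatorElement_def, upperTriangular_inv, upperTriangular_mul_upperTriangular]
  congr 1
  · simp
  · simp only [mul_one, mul_inv_cancel, Units.val_one, mul_neg, one_mul, neg_zero, mul_zero,
      inv_one, add_zero, Units.val_inv_eq_inv_val, inv_inv, zero_add]
    ring

lemma upperTriangular_one_mul_upperTriangular_mul_inv (a : Kˣ) (s : K) :
    upperTriangular 1 s * upperTriangular a 0 * (upperTriangular 1 s)⁻¹ =
      upperTriangular a (s * ((a : K)⁻¹ - a)) := by
  simp only [upperTriangular_inv, upperTriangular_mul_upperTriangular]
  congr 1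
  · simp
  · simp only [one_mul, mul_neg, Units.val_one, mul_zero, zero_add, inv_one, mul_one]
    ring

lemma exists_conj_apply_one_zero_eq_zero [IsAlgClosed K] (A : SL(2, K)) :
    ∃ P : SL(2, K), (P⁻¹ * A * P) 1 0 = 0 := by
  by_cases hc : A 1 0 = 0
  · exact ⟨1, by simpa using hc⟩
  -- a root `p` makes `(p, 1)` an eigenvector of `A`; it is the first column of `P`
  obtain ⟨p, hp⟩ := IsAlgClosed.exists_root
    (C (A 1 0) * X ^ 2 + C (A 1 1 - A 0 0) * X + C (-A 0 1))
    (by rw [degree_quadratic hc]; decide)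
  refine ⟨upperTriangular 1 p * weyl, ?_⟩
  simp [coe_inv, adjugate_fin_two, Matrix.mul_apply, vecMul, dotProduct, Fin.sum_univ_two]
    at hp ⊢
  linear_combination hp

lemma exists_isConj_upperTriangular [IsAlgClosed K] (A : SL(2, K)) :
    ∃ a b, IsConj A (upperTriangular a b) := by
  obtain ⟨P, hP⟩ := exists_conj_apply_one_zero_eq_zero A
  obtain ⟨a, b, ha, hab⟩ := fin_two_exists_eq_mk_of_apply_zero_one_eq_zero _ hP
  refine ⟨Units.mk0 a ha, b, isConj_iff.mpr ⟨P⁻¹, ?_⟩⟩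
  rw [inv_inv, hab]
  ext i j; fin_cases i <;> fin_cases j <;> simp

lemma upperTriangular_one_mem_commutatorSet [Infinite K] (b : K) :
    upperTriangular 1 b ∈ commutatorSet SL(2, K) := by
  classical
  obtain ⟨μ, hμ⟩ := Infinite.exists_notMem_finset ({0, 1, -1} : Finset K)
  simp only [Finset.mem_insert, Finset.mem_singleton, not_or] at hμ
  obtain ⟨hμ0, hμ1, hμ1'⟩ := hμ
  have hne : μ * μ - 1 ≠ 0 := by
    rw [sub_ne_zero, Ne, mul_self_eq_one_iff, not_or]
    exact ⟨hμ1, hμ1'⟩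
  refine ⟨upperTriangular (Units.mk0 μ hμ0) 0, upperTriangular 1 (b / (μ * μ - 1)), ?_⟩
  rw [commutatorElement_upperTriangular_upperTriangular_one]
  simp [mul_div_cancel₀ _ hne]

lemma upperTriangular_mem_commutatorSet [IsAlgClosed K] {a : Kˣ} (ha₁ : a ≠ 1) (ha₂ : a ≠ -1)
    (b : K) : upperTriangular a b ∈ commutatorSet SL(2, K) := by
  obtain ⟨μ, hμ⟩ := IsAlgClosed.exists_pow_nat_eq (a : K) two_pos
  have hμ0 : μ ≠ 0 := by
    rintro rfl
    exact a.ne_zero (by simpa using hμ.symm)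
  have hμa : Units.mk0 μ hμ0 * Units.mk0 μ hμ0 = a := by
    ext; simp [← hμ, sq]
  have hdiag : upperTriangular a 0 ∈ commutatorSet SL(2, K) :=
    ⟨_, _, hμa ▸ commutatorElement_upperTriangular_weyl _⟩
  have hne : (a : K)⁻¹ - a ≠ 0 := by
    intro h
    have ha : (a : K) * a = 1 := by simpa [sub_eq_zero.mp h] using a.mul_inv'
    rcases mul_self_eq_one_iff.mp ha with h | h
    exacts [ha₁ (Units.ext h), ha₂ (Units.ext h)]
  convert (isConj_iff.mpr ⟨upperTriangular 1 (b / ((a : K)⁻¹ - a)), rfl⟩).mem_commutatorSet hdiag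
  rw [upperTriangular_one_mul_upperTriangular_mul_inv, div_mul_cancel₀ _ hne]

lemma mem_commutatorSet_or_neg_mem_commutatorSet [IsAlgClosed K] (A : SL(2, K)) :
    A ∈ commutatorSet SL(2, K) ∨ -A ∈ commutatorSet SL(2, K) := by
  obtain ⟨a, b, hA⟩ := exists_isConj_upperTriangular A
  have hA' : IsConj (-A) (upperTriangular (-a) (-b)) := by
    obtain ⟨c, hc⟩ := isConj_iff.mp hA
    exact isConj_iff.mpr ⟨c, by rw [mul_neg, neg_mul, hc, neg_upperTriangular]⟩
  refine Or.imp hA.symm.mem_commutatorSet hA'.symm.mem_commutatorSet ?_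
  by_cases ha₁ : a = 1
  · exact .inl (ha₁ ▸ upperTriangular_one_mem_commutatorSet b)
  by_cases ha₂ : a = -1
  · exact .inr (by rw [ha₂, neg_neg]; exact upperTriangular_one_mem_commutatorSet _)
  exact .inl (upperTriangular_mem_commutatorSet ha₁ ha₂ b)

end Matrix.SpecialLinearGroup

lemma Matrix.ProjectiveSpecialLinearGroup.mem_commutatorSet {K : Type*} [Field K]
    [IsAlgClosed K] (g : PSL(2, K)) : g ∈ commutatorSet PSL(2, K) := by
  obtain ⟨A, rfl⟩ := QuotientGroup.mk'_surjective (Subgroup.center SL(2, K)) g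
  have hneg : QuotientGroup.mk' _ (-A) = QuotientGroup.mk' (Subgroup.center SL(2, K)) A := by
    rw [← mul_neg_one]
    exact QuotientGroup.mk_mul_of_mem A (Subgroup.mem_center_iff.mpr fun g => by simp)
  rcases SpecialLinearGroup.mem_commutatorSet_or_neg_mem_commutatorSet A with h | h
  · exact MonoidHom.map_mem_commutatorSet _ h
  · exact hneg ▸ MonoidHom.map_mem_commutatorSet _ h

/-- Every element of `PSL(2,ℂ)` is a commutator. -/
theorem stmt_6 (g : PSL2C) : ∃ x y : PSL2C, g = x * y * x⁻¹ * y⁻¹ := by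
  obtain ⟨x, y, h⟩ := Matrix.ProjectiveSpecialLinearGroup.mem_commutatorSet g
  exact ⟨x, y, h.symm⟩
end

section
/- Let g be an element of PSL(2,ℂ) such that g ≠ 1 and g² ≠ 1. Then the centralizer of g in PSL(2,ℂ), i.e. the subgroup {x ∈ PSL(2,ℂ) : x·g = g·x}, is commutative. -/
open Matrix in
lemma cross_eq_zero_of_cross_eq_zero_of_ne_zero {F : Type*} [Field F] {u v w : Fin 3 → F}
    (hu : u ≠ 0) (hv : u ⨯₃ v = 0) (hw : u ⨯₃ w = 0) : v ⨯₃ w = 0 := by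
  have parallel : ∀ x, u ⨯₃ x = 0 → ∃ a : F, a • u = x := fun x hx => by
    simpa [LinearIndependent.pair_iff' hu] using
      mt crossProduct_ne_zero_iff_linearIndependent.mpr (not_not.mpr hx)
  obtain ⟨a, rfl⟩ := parallel v hv
  obtain ⟨b, rfl⟩ := parallel w hw
  simp [cross_self]

namespace Matrix

section CommRing

variable {R : Type*} [CommRing R]

/-- The coordinates `(b, c, a - d)` of the traceless part of `!![a, b; c, d]`. In them the
commutator of `2 × 2` matrices is the cross product, i.e. `𝔰𝔩₂ ≅ 𝔰𝔬₃`. -/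
def sl2Vec (A : Matrix (Fin 2) (Fin 2) R) : Fin 3 → R :=
  ![A 0 1, A 1 0, A 0 0 - A 1 1]

lemma mul_sub_mul_eq_sl2Vec_cross (A B : Matrix (Fin 2) (Fin 2) R) :
    A * B - B * A =
      !![(sl2Vec A ⨯₃ sl2Vec B) 2, (sl2Vec A ⨯₃ sl2Vec B) 1;
        (sl2Vec A ⨯₃ sl2Vec B) 0, -(sl2Vec A ⨯₃ sl2Vec B) 2] := by
  ext i j
  fin_cases i <;> fin_cases j <;> simp [sl2Vec, cross_apply, mul_apply] <;> ring

lemma commute_iff_sl2Vec_cross_eq_zero {A B : Matrix (Fin 2) (Fin 2) R} :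
    Commute A B ↔ sl2Vec A ⨯₃ sl2Vec B = 0 := by
  rw [Commute, SemiconjBy, ← sub_eq_zero, mul_sub_mul_eq_sl2Vec_cross]
  constructor
  · intro h
    ext k
    fin_cases k
    · simpa using congrFun (congrFun h 1) 0
    · simpa using congrFun (congrFun h 0) 1
    · simpa using congrFun (congrFun h 0) 0
  · intro h
    rw [h]
    ext i j
    fin_cases i <;> fin_cases j <;> simp

lemma eq_scalar_of_sl2Vec_eq_zero {A : Matrix (Fin 2) (Fin 2) R} (h : sl2Vec A = 0) :
    A = scalar (Fin 2) (A 0 0) := by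
  have h01 : A 0 1 = 0 := by simpa [sl2Vec] using congrFun h 0
  have h10 : A 1 0 = 0 := by simpa [sl2Vec] using congrFun h 1
  have h11 : A 0 0 - A 1 1 = 0 := by simpa [sl2Vec] using congrFun h 2
  ext i j
  fin_cases i <;> fin_cases j <;> simp [h01, h10, (sub_eq_zero.mp h11).symm]

lemma sq_eq_neg_one_of_trace_eq_zero {A : Matrix (Fin 2) (Fin 2) R} (htr : A.trace = 0)
    (hdet : A.det = 1) : A ^ 2 = -1 := by
  rw [trace_fin_two] at htr
  rw [det_fin_two] at hdet
  ext i j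
  fin_cases i <;> fin_cases j <;>
    simp only [Fin.zero_eta, Fin.mk_one, Fin.isValue, sq, mul_apply, Fin.sum_univ_two,
      Matrix.neg_apply, one_apply_eq, one_apply_ne zero_ne_one, one_apply_ne one_ne_zero, neg_zero]
  · linear_combination A 0 0 * htr - hdet
  · linear_combination A 0 1 * htr
  · linear_combination A 1 0 * htr
  · linear_combination A 1 1 * htr - hdet

end CommRing

lemma commute_of_sl2Vec_ne_zero {F : Type*} [Field F] {A B C : Matrix (Fin 2) (Fin 2) F}
    (hA : sl2Vec A ≠ 0) (hB : Commute A B) (hC : Commute A C) : Commute B C := by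
  rw [commute_iff_sl2Vec_cross_eq_zero] at *
  exact cross_eq_zero_of_cross_eq_zero_of_ne_zero hA hB hC

namespace SpecialLinearGroup

section General

variable {n K : Type*} [Fintype n] [DecidableEq n] [Field K]

local notation "SL" => SpecialLinearGroup n K

lemma commute_of_commute_mk {G X : SL} (htr : trace (G : Matrix n n K) ≠ 0)
    (h : Commute (X : SL ⧸ Subgroup.center SL) G) : Commute X G := by
  have hmem : (X * G)⁻¹ * (G * X) ∈ Subgroup.center SL :=
    QuotientGroup.eq.mp (by simpa only [QuotientGroup.mk_mul] using h.eq)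
  obtain ⟨r, -, hr⟩ := mem_center_iff.mp hmem
  have hGX : (G * X : Matrix n n K) = r • (X * G) := by
    rw [← coe_mul, ← mul_inv_cancel_left (X * G) (G * X), coe_mul (X * G), ← hr, scalar_apply,
      ← smul_eq_mul_diagonal, coe_mul]
  have hX : IsUnit (X : Matrix n n K) := (isUnit_iff_isUnit_det _).mpr (by simp)
  have hr1 : r = 1 := by
    have htr' : trace (G : Matrix n n K) = r * trace (G : Matrix n n K) :=
      calc trace (G : Matrix n n K)
          = trace ((X : Matrix n n K)⁻¹ * ((G : Matrix n n K) * (X : Matrix n n K))) := by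
            rw [← mul_assoc, trace_conj' hX]
        _ = r * trace (G : Matrix n n K) := by
            rw [hGX, mul_smul_comm, trace_smul, trace_mul_comm, trace_conj hX, smul_eq_mul]
    exact (mul_left_eq_self₀.mp htr'.symm).resolve_right htr
  ext1
  rw [coe_mul, coe_mul, hGX, hr1, one_smul]

end General

section FinTwo

variable {K : Type*} [Field K]

local notation "SL₂" => SpecialLinearGroup (Fin 2) K

lemma sl2Vec_ne_zero_of_mk_ne_one {G : SL₂} (hG : (G : SL₂ ⧸ Subgroup.center SL₂) ≠ 1) :
    sl2Vec (G : Matrix (Fin 2) (Fin 2) K) ≠ 0 := by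
  intro h
  apply hG
  obtain ⟨r, hr⟩ : ∃ r, (G : Matrix (Fin 2) (Fin 2) K) = scalar (Fin 2) r :=
    ⟨_, eq_scalar_of_sl2Vec_eq_zero h⟩
  rw [QuotientGroup.eq_one_iff, mem_center_iff]
  refine ⟨r, ?_, hr.symm⟩
  simpa [hr] using G.det_coe

lemma trace_ne_zero_of_mk_sq_ne_one {G : SL₂} (hG : (G : SL₂ ⧸ Subgroup.center SL₂) ^ 2 ≠ 1) :
    trace (G : Matrix (Fin 2) (Fin 2) K) ≠ 0 := by
  intro h
  apply hG
  rw [← QuotientGroup.mk_pow, QuotientGroup.eq_one_iff, mem_center_iff]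
  refine ⟨-1, by norm_num, ?_⟩
  rw [coe_pow, sq_eq_neg_one_of_trace_eq_zero h G.det_coe, map_neg, map_one]

end FinTwo

end SpecialLinearGroup

end Matrix

/-- The centralizer of a nontrivial, non-involutive element of `PSL(2,ℂ)`
is commutative. -/
theorem stmt_7 (g : PSL2C) (hg : g ≠ 1) (hg2 : g ^ 2 ≠ 1) :
    ∀ x y : PSL2C, x * g = g * x → y * g = g * y → x * y = y * x := by
  obtain ⟨G, rfl⟩ := QuotientGroup.mk_surjective g
  intro x y hx hy
  obtain ⟨X, rfl⟩ := QuotientGroup.mk_surjective x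
  obtain ⟨Y, rfl⟩ := QuotientGroup.mk_surjective y
  have htr := Matrix.SpecialLinearGroup.trace_ne_zero_of_mk_sq_ne_one hg2
  have hXG := Matrix.SpecialLinearGroup.commute_of_commute_mk htr hx
  have hYG := Matrix.SpecialLinearGroup.commute_of_commute_mk htr hy
  have hXY : Commute X Y := Subtype.ext <|
    Matrix.commute_of_sl2Vec_ne_zero (Matrix.SpecialLinearGroup.sl2Vec_ne_zero_of_mk_ne_one hg)
      (congrArg Subtype.val hXG).symm (congrArg Subtype.val hYG).symm
  exact congrArg QuotientGroup.mk hXY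
end

section
/- Let H be a group, let c be an element of the center of H, and let s be an element of the commutator subgroup [H,H]. If ρ : H → PSL(2,ℂ) is a group homomorphism such that ρ(c) ≠ 1 and ρ(c)² ≠ 1, then ρ(s) = 1. -/
open Matrix

section Aux

local notation "SL2" => Matrix.SpecialLinearGroup (Fin 2) ℂ

lemma mem_span_aux (A B : Matrix (Fin 2) (Fin 2) ℂ)
    (hns : ¬(A 0 1 = 0 ∧ A 1 0 = 0 ∧ A 0 0 = A 1 1))
    (h : B * A = A * B) : ∃ x y : ℂ, B = x • (1 : Matrix (Fin 2) (Fin 2) ℂ) + y • A := by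
  have e00 : B 0 0 * A 0 0 + B 0 1 * A 1 0 = A 0 0 * B 0 0 + A 0 1 * B 1 0 := by
    simpa [Matrix.mul_apply, Fin.sum_univ_two] using congrFun (congrFun h 0) 0
  have e01 : B 0 0 * A 0 1 + B 0 1 * A 1 1 = A 0 0 * B 0 1 + A 0 1 * B 1 1 := by
    simpa [Matrix.mul_apply, Fin.sum_univ_two] using congrFun (congrFun h 0) 1
  have e10 : B 1 0 * A 0 0 + B 1 1 * A 1 0 = A 1 0 * B 0 0 + A 1 1 * B 1 0 := by
    simpa [Matrix.mul_apply, Fin.sum_univ_two] using congrFun (congrFun h 1) 0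
  by_cases hb : A 0 1 = 0
  · by_cases hcc : A 1 0 = 0
    · have had' : A 0 0 - A 1 1 ≠ 0 := sub_ne_zero.mpr fun had => hns ⟨hb, hcc, had⟩
      have hq : B 0 1 = 0 := by
        have h' : B 0 1 * (A 1 1 - A 0 0) = 0 := by
          linear_combination e01 + (B 1 1 - B 0 0) * hb
        rcases mul_eq_zero.mp h' with h'' | h''
        · exact h''
        · exact absurd (by linear_combination -h'') had'
      have hr : B 1 0 = 0 := by
        have h' : B 1 0 * (A 0 0 - A 1 1) = 0 := by
          linear_combination e10 + (B 0 0 - B 1 1) * hcc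
        rcases mul_eq_zero.mp h' with h'' | h''
        · exact h''
        · exact absurd h'' had'
      refine ⟨B 0 0 - ((B 0 0 - B 1 1) / (A 0 0 - A 1 1)) * A 0 0,
        (B 0 0 - B 1 1) / (A 0 0 - A 1 1), ?_⟩
      ext i j
      fin_cases i <;> fin_cases j <;> simp [Matrix.one_apply]
      · rw [hq, hb, mul_zero]
      · rw [hr, hcc, mul_zero]
      · field_simp
        ring
    · have hq : B 0 1 = 0 := by
        have h' : B 0 1 * A 1 0 = 0 := by linear_combination e00 + B 1 0 * hb
        rcases mul_eq_zero.mp h' with h'' | h''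
        · exact h''
        · exact absurd h'' hcc
      refine ⟨B 0 0 - (B 1 0 / A 1 0) * A 0 0, B 1 0 / A 1 0, ?_⟩
      ext i j
      fin_cases i <;> fin_cases j <;> simp [Matrix.one_apply]
      · rw [hq, hb, mul_zero]
      · field_simp
      · field_simp
        linear_combination e10
  · refine ⟨B 0 0 - (B 0 1 / A 0 1) * A 0 0, B 0 1 / A 0 1, ?_⟩
    ext i j
    fin_cases i <;> fin_cases j <;> simp [Matrix.one_apply] <;> field_simp
    · linear_combination -e00
    · linear_combination -e01

/-- Two matrices commuting with a non-scalar 2×2 matrix commute with each other. -/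
lemma comm_of_commute (A B C : Matrix (Fin 2) (Fin 2) ℂ)
    (hns : ¬(A 0 1 = 0 ∧ A 1 0 = 0 ∧ A 0 0 = A 1 1))
    (hB : B * A = A * B) (hC : C * A = A * C) : B * C = C * B := by
  obtain ⟨x, y, rfl⟩ := mem_span_aux A B hns hB
  obtain ⟨x', y', rfl⟩ := mem_span_aux A C hns hC
  simp only [add_mul, mul_add, smul_mul_assoc, mul_smul_comm, one_mul, mul_one, smul_smul,
    smul_add]
  module

/-- Cayley–Hamilton for 2×2 matrices. -/
lemma cayley2 (M : Matrix (Fin 2) (Fin 2) ℂ) :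
    M * M = M.trace • M - M.det • (1 : Matrix (Fin 2) (Fin 2) ℂ) := by
  ext i j
  fin_cases i <;> fin_cases j <;>
    simp [Matrix.mul_apply, Matrix.trace, Matrix.diag, Matrix.det_fin_two,
      Fin.sum_univ_two, Matrix.one_apply] <;> ring

/-- Lifting a commutation relation from `PSL(2,ℂ)` to `SL(2,ℂ)`, given that the square of
the element is not central. -/
lemma sl_lift (A U : SL2)
    (hA2 : ((QuotientGroup.mk A : PSL2C)) ^ 2 ≠ 1)
    (h : (QuotientGroup.mk U : PSL2C) * QuotientGroup.mk A
        = QuotientGroup.mk A * QuotientGroup.mk U) :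
    (U : Matrix (Fin 2) (Fin 2) ℂ) * A = A * U := by
  rw [← QuotientGroup.mk_mul, ← QuotientGroup.mk_mul, QuotientGroup.eq] at h
  obtain ⟨r, hr2, hr⟩ := Matrix.SpecialLinearGroup.mem_center_iff.mp h
  simp only [Fintype.card_fin] at hr2
  -- matrix-level consequence
  have hinv : ((U * A : SL2) : Matrix (Fin 2) (Fin 2) ℂ) * (((U * A)⁻¹ : SL2) : Matrix (Fin 2) (Fin 2) ℂ) = 1 := by
    rw [← Matrix.SpecialLinearGroup.coe_mul, mul_inv_cancel, Matrix.SpecialLinearGroup.coe_one]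
  have hscalar : (Matrix.scalar (Fin 2) r : Matrix (Fin 2) (Fin 2) ℂ) = r • 1 := by
    rw [Matrix.scalar_apply, Matrix.smul_one_eq_diagonal]
  have hmat : ((A * U : SL2) : Matrix (Fin 2) (Fin 2) ℂ)
      = r • ((U * A : SL2) : Matrix (Fin 2) (Fin 2) ℂ) := by
    have hr' : (((U * A)⁻¹ : SL2) : Matrix (Fin 2) (Fin 2) ℂ)
        * ((A * U : SL2) : Matrix (Fin 2) (Fin 2) ℂ) = r • 1 := by
      rw [← hscalar, hr]
      simp [Matrix.SpecialLinearGroup.coe_mul]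
    calc ((A * U : SL2) : Matrix (Fin 2) (Fin 2) ℂ)
        = ((U * A : SL2) : Matrix (Fin 2) (Fin 2) ℂ)
          * ((((U * A)⁻¹ : SL2) : Matrix (Fin 2) (Fin 2) ℂ)
            * ((A * U : SL2) : Matrix (Fin 2) (Fin 2) ℂ)) := by
          rw [← mul_assoc, hinv, one_mul]
      _ = r • ((U * A : SL2) : Matrix (Fin 2) (Fin 2) ℂ) := by
          rw [hr', Matrix.mul_smul, mul_one]
  have hrcases : r = 1 ∨ r = -1 := by
    have : (r - 1) * (r + 1) = 0 := by linear_combination hr2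
    rcases mul_eq_zero.mp this with h' | h'
    · exact Or.inl (by linear_combination h')
    · exact Or.inr (by linear_combination h')
  rcases hrcases with rfl | rfl
  · simpa [Matrix.SpecialLinearGroup.coe_mul] using hmat.symm
  · -- the sign −1 is impossible: it forces `A² = -1`, contradicting `hA2`
    exfalso
    have hAU : ((A : Matrix (Fin 2) (Fin 2) ℂ)) * U = -(((U : Matrix (Fin 2) (Fin 2) ℂ)) * A) := by
      simpa [Matrix.SpecialLinearGroup.coe_mul] using hmat
    -- trace A = 0
    have hWU : (((U⁻¹ : SL2)) : Matrix (Fin 2) (Fin 2) ℂ) * (U : Matrix (Fin 2) (Fin 2) ℂ) = 1 := by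
      rw [← Matrix.SpecialLinearGroup.coe_mul, inv_mul_cancel, Matrix.SpecialLinearGroup.coe_one]
    have hUW : (U : Matrix (Fin 2) (Fin 2) ℂ) * (((U⁻¹ : SL2)) : Matrix (Fin 2) (Fin 2) ℂ) = 1 := by
      rw [← Matrix.SpecialLinearGroup.coe_mul, mul_inv_cancel, Matrix.SpecialLinearGroup.coe_one]
    have htr : Matrix.trace (A : Matrix (Fin 2) (Fin 2) ℂ) = 0 := by
      have hone : Matrix.trace ((((U⁻¹ : SL2)) : Matrix (Fin 2) (Fin 2) ℂ)
          * ((A : Matrix (Fin 2) (Fin 2) ℂ) * (U : Matrix (Fin 2) (Fin 2) ℂ)))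
          = Matrix.trace (A : Matrix (Fin 2) (Fin 2) ℂ) := by
        rw [Matrix.trace_mul_comm, mul_assoc, hUW, mul_one]
      have htwo : Matrix.trace ((((U⁻¹ : SL2)) : Matrix (Fin 2) (Fin 2) ℂ)
          * ((A : Matrix (Fin 2) (Fin 2) ℂ) * (U : Matrix (Fin 2) (Fin 2) ℂ)))
          = -Matrix.trace (A : Matrix (Fin 2) (Fin 2) ℂ) := by
        rw [hAU, Matrix.mul_neg, Matrix.trace_neg, ← mul_assoc, hWU, one_mul]
      rw [hone] at htwo
      linear_combination htwo / 2
    have hA2' : ((A : Matrix (Fin 2) (Fin 2) ℂ)) * A = -1 := by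
      rw [cayley2, htr, A.prop]
      simp
    apply hA2
    rw [← QuotientGroup.mk_pow, QuotientGroup.eq_one_iff]
    refine Matrix.SpecialLinearGroup.mem_center_iff.mpr ⟨-1, by simp, ?_⟩
    have : ((A ^ 2 : SL2) : Matrix (Fin 2) (Fin 2) ℂ) = -1 := by
      rw [pow_two, Matrix.SpecialLinearGroup.coe_mul, hA2']
    rw [this, Matrix.scalar_apply]
    ext i j
    fin_cases i <;> fin_cases j <;> simp

/-- A non-central element of `SL(2,ℂ)` is a non-scalar matrix. -/
lemma nonscalar_of_not_center (A : SL2)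
    (hA : (QuotientGroup.mk A : PSL2C) ≠ 1) :
    ¬((A : Matrix (Fin 2) (Fin 2) ℂ) 0 1 = 0 ∧ (A : Matrix (Fin 2) (Fin 2) ℂ) 1 0 = 0 ∧
      (A : Matrix (Fin 2) (Fin 2) ℂ) 0 0 = (A : Matrix (Fin 2) (Fin 2) ℂ) 1 1) := by
  rintro ⟨hb, hcc, had⟩
  apply hA
  rw [QuotientGroup.eq_one_iff]
  refine Matrix.SpecialLinearGroup.mem_center_iff.mpr ⟨(A : Matrix (Fin 2) (Fin 2) ℂ) 0 0, ?_, ?_⟩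
  · have hdet : ((A : Matrix (Fin 2) (Fin 2) ℂ)).det = 1 := A.prop
    rw [Matrix.det_fin_two, hb, hcc, ← had] at hdet
    simpa [pow_two, Fintype.card_fin] using hdet
  · ext i j
    fin_cases i <;> fin_cases j <;>
      simp [Matrix.scalar_apply, Matrix.diagonal, Matrix.of_apply, hb, hcc, ← had]

end Aux

/-- If a homomorphism `ρ : H → PSL(2,ℂ)` sends a central element `c` to a
nontrivial non-involutive element, then `ρ` kills the commutator subgroup. -/
theorem stmt_8 (H : Type*) [Group H] (c : H) (hc : c ∈ Subgroup.center H)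
    (s : H) (hs : s ∈ commutator H) (ρ : H →* PSL2C)
    (h1 : ρ c ≠ 1) (h2 : (ρ c) ^ 2 ≠ 1) : ρ s = 1 := by
  have key : ∀ x y : H, Commute (ρ x) (ρ y) := by
    intro x y
    obtain ⟨A, hA⟩ := QuotientGroup.mk_surjective (ρ c)
    obtain ⟨U, hU⟩ := QuotientGroup.mk_surjective (ρ x)
    obtain ⟨V, hV⟩ := QuotientGroup.mk_surjective (ρ y)
    have hcx : ∀ z : H, ρ z * ρ c = ρ c * ρ z := fun z => by
      rw [← _root_.map_mul, ← _root_.map_mul, (Subgroup.mem_center_iff.mp hc z)]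
    have hA1 : (QuotientGroup.mk A : PSL2C) ≠ 1 := by rw [hA]; exact h1
    have hA2 : (QuotientGroup.mk A : PSL2C) ^ 2 ≠ 1 := by rw [hA]; exact h2
    have hUA : (U : Matrix (Fin 2) (Fin 2) ℂ) * A = A * U :=
      sl_lift A U hA2 (by rw [hU, hA]; exact hcx x)
    have hVA : (V : Matrix (Fin 2) (Fin 2) ℂ) * A = A * V :=
      sl_lift A V hA2 (by rw [hV, hA]; exact hcx y)
    have hUV : (U : Matrix (Fin 2) (Fin 2) ℂ) * V = V * U :=
      comm_of_commute A U V (nonscalar_of_not_center A hA1) hUA hVA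
    have hUVsl : U * V = V * U := Subtype.ext (by
      simpa [Matrix.SpecialLinearGroup.coe_mul] using hUV)
    show ρ x * ρ y = ρ y * ρ x
    rw [← hU, ← hV, ← QuotientGroup.mk_mul, ← QuotientGroup.mk_mul, hUVsl]
  have hker : commutator H ≤ ρ.ker := by
    rw [commutator_def, Subgroup.commutator_le]
    intro g _ h _
    rw [MonoidHom.mem_ker, map_commutatorElement]
    exact commutatorElement_eq_one_iff_commute.mpr (key g h)
  exact hker hs
end
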